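/- arXiv:math/0005265 — 2 statements merged into one kernel-verified Lean document; each statement's English description precedes it below -/
import Mathlib

section
/- Let H and K be Hilbert spaces, X, Y ∈ B(H ⊗ K), v, w ∈ K, and (e_i)_{i∈I} an orthonormal basis of K. Then the net of finite partial sums ∑_{i∈J} (ι ⊗ ω_{e_i,w})(X) (ι ⊗ ω_{v,e_i})(Y), indexed by finite subsets J of I, is bounded and converges in the strong-* topology to (ι ⊗ ω_{v,w})(XY). -/
open scoped ComplexInnerProductSpace ENNReal
open ContinuousLinearMap Filter

noncomputable section

/-- Data exhibiting `HK` as the Hilbert-space tensor product of `H` and `K`,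
together with the canonical elementary tensor operators and slice maps. -/
structure TensorData (H K HK : Type*)
    [NormedAddCommGroup H] [InnerProductSpace ℂ H] [CompleteSpace H]
    [NormedAddCommGroup K] [InnerProductSpace ℂ K] [CompleteSpace K]
    [NormedAddCommGroup HK] [InnerProductSpace ℂ HK] [CompleteSpace HK] : Type _ where
  tmul : H → K → HK
  inner_tmul : ∀ h h' v v', ⟪tmul h v, tmul h' v'⟫ = ⟪h, h'⟫ * ⟪v, v'⟫
  dense_span : Dense (Submodule.span ℂ (Set.range fun p : H × K => tmul p.1 p.2) : Set HK)
  top : (H →L[ℂ] H) → (K →L[ℂ] K) → (HK →L[ℂ] HK)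
  top_tmul : ∀ a b h v, top a b (tmul h v) = tmul (a h) (b v)
  sliceR : (HK →L[ℂ] HK) → K → K → (H →L[ℂ] H)
  inner_sliceR : ∀ X v w h h', ⟪h', sliceR X v w h⟫ = ⟪tmul h' w, X (tmul h v)⟫
  sliceL : (HK →L[ℂ] HK) → H → H → (K →L[ℂ] K)
  inner_sliceL : ∀ X h h' v v', ⟪v', sliceL X h h' v⟫ = ⟪tmul h' v', X (tmul h v)⟫

/-- GNS data for a normal semifinite faithful weight on `B(H)` (restricted to a
von Neumann subalgebra when relevant). -/
structure WeightGNS (H Hphi : Type*)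
    [NormedAddCommGroup H] [InnerProductSpace ℂ H] [CompleteSpace H]
    [NormedAddCommGroup Hphi] [InnerProductSpace ℂ Hphi] [CompleteSpace Hphi] : Type _ where
  weight : (H →L[ℂ] H) → ℝ≥0∞
  gnsMap : (H →L[ℂ] H) → Hphi
  norm_gnsMap : ∀ x, weight (adjoint x ∘L x) ≠ ⊤ →
    ‖gnsMap x‖ ^ 2 = (weight (adjoint x ∘L x)).toReal
section Aux

set_option linter.unusedSectionVars false

variable {H K HK : Type*}
    [NormedAddCommGroup H] [InnerProductSpace ℂ H] [CompleteSpace H]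
    [NormedAddCommGroup K] [InnerProductSpace ℂ K] [CompleteSpace K]
    [NormedAddCommGroup HK] [InnerProductSpace ℂ HK] [CompleteSpace HK]
    (T : TensorData H K HK)

lemma TD.norm_tmul (h : H) (v : K) : ‖T.tmul h v‖ = ‖h‖ * ‖v‖ := by
  have h1 : ‖T.tmul h v‖ ^ 2 = (‖h‖ * ‖v‖) ^ 2 := by
    rw [← inner_self_eq_norm_sq (𝕜 := ℂ), T.inner_tmul,
      inner_self_eq_norm_sq_to_K (𝕜 := ℂ), inner_self_eq_norm_sq_to_K (𝕜 := ℂ)]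
    simp [mul_pow]
    ring_nf
    simp [← Complex.ofReal_pow, ← Complex.ofReal_mul]
  nlinarith [norm_nonneg (T.tmul h v), norm_nonneg h, norm_nonneg v,
    mul_nonneg (norm_nonneg h) (norm_nonneg v)]

lemma TD.tmul_add (a : H) (x y : K) :
    T.tmul a (x + y) = T.tmul a x + T.tmul a y := by
  rw [← sub_eq_zero, ← @inner_self_eq_zero ℂ]
  simp only [inner_sub_left, inner_sub_right, inner_add_left, inner_add_right, T.inner_tmul]
  ring

lemma TD.tmul_smul (a : H) (c : ℂ) (x : K) :
    T.tmul a (c • x) = c • T.tmul a x := by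
  rw [← sub_eq_zero, ← @inner_self_eq_zero ℂ]
  simp only [inner_sub_left, inner_sub_right, inner_smul_left, inner_smul_right, T.inner_tmul]
  ring

lemma TD.tmul_sub (a : H) (x y : K) :
    T.tmul a (x - y) = T.tmul a x - T.tmul a y := by
  rw [← sub_eq_zero, ← @inner_self_eq_zero ℂ]
  simp only [inner_sub_left, inner_sub_right, T.inner_tmul]
  ring

lemma TD.tmul_zero (a : H) : T.tmul a (0 : K) = 0 := by
  have := TD.tmul_smul T a 0 0
  simpa using this

lemma TD.tmul_sum {ι : Type*} (a : H) (J : Finset ι) (f : ι → K) :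
    T.tmul a (∑ i ∈ J, f i) = ∑ i ∈ J, T.tmul a (f i) := by
  classical
  induction J using Finset.induction with
  | empty => simp [TD.tmul_zero]
  | insert a s hnot ih =>
      rw [Finset.sum_insert hnot, TD.tmul_add, ih, Finset.sum_insert hnot]

lemma TD.ext_dense {z z' : HK}
    (hzz : ∀ a b, ⟪T.tmul a b, z⟫ = ⟪T.tmul a b, z'⟫) : z = z' := by
  have key : (innerSL ℂ (z - z') : HK →L[ℂ] ℂ) = 0 := by
    apply ContinuousLinearMap.ext_on T.dense_span
    rintro _ ⟨⟨a, b⟩, rfl⟩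
    simp only [innerSL_apply_apply, ContinuousLinearMap.zero_apply]
    rw [← inner_conj_symm]
    rw [inner_sub_right, hzz a b]
    simp
  have := congrArg (fun f : HK →L[ℂ] ℂ => f (z - z')) key
  simp only [innerSL_apply_apply, ContinuousLinearMap.zero_apply] at this
  rw [inner_self_eq_zero, sub_eq_zero] at this
  exact this

variable {I : Type*} (e : HilbertBasis I ℂ K)

/-- finite-rank projection onto the span of `e i`, `i ∈ J`. -/
def Pj (J : Finset I) : K →L[ℂ] K :=
  ∑ i ∈ J, (innerSL ℂ (e i)).smulRight (e i)

lemma Pj_apply (J : Finset I) (k : K) : Pj e J k = ∑ i ∈ J, ⟪e i, k⟫ • e i := by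
  simp [Pj]

lemma Pj_selfadj (J : Finset I) (b d : K) : ⟪Pj e J b, d⟫ = ⟪b, Pj e J d⟫ := by
  simp only [Pj_apply, inner_sum, sum_inner, inner_smul_left, inner_smul_right]
  congr 1; ext i
  rw [← inner_conj_symm b (e i)]
  ring

lemma Pj_idem (J : Finset I) (k : K) : Pj e J (Pj e J k) = Pj e J k := by
  classical
  have he := orthonormal_iff_ite.mp e.orthonormal
  simp only [Pj_apply, inner_sum, inner_smul_right]
  refine Finset.sum_congr rfl fun i hi => ?_
  congr 1
  rw [Finset.sum_eq_single i]
  · simp [he i i, e.orthonormal.1 i]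
  · intro j hj hne
    simp [he i j, Ne.symm hne]
  · intro h; exact absurd hi h

lemma Pj_tendsto (k : K) :
    Tendsto (fun J : Finset I => Pj e J k) atTop (nhds k) := by
  have h2 : HasSum (fun i => ⟪e i, k⟫ • e i) k := by
    simpa [HilbertBasis.repr_apply_apply] using e.hasSum_repr k
  unfold HasSum at h2
  simpa [Pj_apply] using h2

lemma TD.top_inner (p : K →L[ℂ] K) (hp : ∀ b d, ⟪p b, d⟫ = ⟪b, p d⟫)
    (a : H) (b : K) (z : HK) :
    ⟪T.tmul a b, T.top 1 p z⟫ = ⟪T.tmul a (p b), z⟫ := by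
  have key : (innerSL ℂ (T.tmul a b)).comp (T.top 1 p) = innerSL ℂ (T.tmul a (p b)) := by
    apply ContinuousLinearMap.ext_on T.dense_span
    rintro _ ⟨⟨c, d⟩, rfl⟩
    simp only [ContinuousLinearMap.comp_apply, innerSL_apply_apply]
    rw [T.top_tmul, T.inner_tmul, T.inner_tmul]
    simp only [ContinuousLinearMap.one_apply]
    rw [hp b d]
  have := congrArg (fun f : HK →L[ℂ] ℂ => f z) key
  simpa using this

lemma TD.topP_adjoint (p : K →L[ℂ] K) (hp : ∀ b d, ⟪p b, d⟫ = ⟪b, p d⟫) :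
    adjoint (T.top 1 p) = T.top 1 p := by
  ext z
  apply TD.ext_dense T
  intro a b
  rw [adjoint_inner_right, T.top_tmul, TD.top_inner T p hp]
  simp only [ContinuousLinearMap.one_apply]

lemma TD.topP_idem (p : K →L[ℂ] K) (hp : ∀ b d, ⟪p b, d⟫ = ⟪b, p d⟫)
    (hidem : ∀ b, p (p b) = p b) (z : HK) :
    T.top 1 p (T.top 1 p z) = T.top 1 p z := by
  apply TD.ext_dense T
  intro a b
  rw [TD.top_inner T p hp, TD.top_inner T p hp, TD.top_inner T p hp, hidem b]


lemma TD.topP_norm (p : K →L[ℂ] K) (hp : ∀ b d, ⟪p b, d⟫ = ⟪b, p d⟫)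
    (hidem : ∀ b, p (p b) = p b) (z : HK) :
    ‖T.top 1 p z‖ ≤ ‖z‖ := by
  have h1 : ⟪T.top 1 p z, T.top 1 p z⟫ = ⟪z, T.top 1 p z⟫ := by
    have h := adjoint_inner_right (T.top 1 p) z (T.top 1 p z)
    rw [TD.topP_adjoint T p hp, TD.topP_idem T p hp hidem] at h
    exact h.symm
  have h2 : ‖T.top 1 p z‖ ^ 2 ≤ ‖z‖ * ‖T.top 1 p z‖ := by
    rw [← inner_self_eq_norm_sq (𝕜 := ℂ), h1]
    exact re_inner_le_norm z (T.top 1 p z)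
  nlinarith [norm_nonneg (T.top 1 p z), norm_nonneg z]

lemma Qj_norm (J : Finset I) (z : HK) : ‖T.top 1 (Pj e J) z‖ ≤ ‖z‖ :=
  TD.topP_norm T _ (Pj_selfadj e J) (Pj_idem e J) z

lemma Qj_tendsto (z : HK) :
    Tendsto (fun J : Finset I => T.top 1 (Pj e J) z) atTop (nhds z) := by
  classical
  have helem : ∀ u ∈ (Set.range fun p : H × K => T.tmul p.1 p.2),
      Tendsto (fun J : Finset I => T.top 1 (Pj e J) u) atTop (nhds u) := by
    rintro _ ⟨⟨h, k⟩, rfl⟩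
    rw [tendsto_iff_norm_sub_tendsto_zero]
    have heq : ∀ J : Finset I,
        ‖T.top 1 (Pj e J) (T.tmul h k) - T.tmul h k‖ = ‖h‖ * ‖Pj e J k - k‖ := by
      intro J
      rw [T.top_tmul]
      rw [show (1 : H →L[ℂ] H) h = h from rfl, ← TD.tmul_sub, TD.norm_tmul]
    simp only [heq]
    have hP := Pj_tendsto e k
    rw [tendsto_iff_norm_sub_tendsto_zero] at hP
    simpa using hP.const_mul ‖h‖
  have hspan : ∀ u ∈ Submodule.span ℂ (Set.range fun p : H × K => T.tmul p.1 p.2),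
      Tendsto (fun J : Finset I => T.top 1 (Pj e J) u) atTop (nhds u) := by
    intro u hu
    induction hu using Submodule.span_induction with
    | mem x hx => exact helem x hx
    | zero => simpa using (tendsto_const_nhds : Tendsto (fun _ : Finset I => (0 : HK)) atTop _)
    | add x y hx hy ihx ihy => simpa [map_add] using ihx.add ihy
    | smul c x hx ih => simpa [map_smul] using ih.const_smul c
  rw [Metric.tendsto_atTop]
  intro ε hε
  obtain ⟨u, hu, hdist⟩ := T.dense_span.exists_dist_lt z (show (0:ℝ) < ε/3 by linarith)
  have hu' := hspan u hu
  rw [Metric.tendsto_atTop] at hu'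
  obtain ⟨J₀, hJ₀⟩ := hu' (ε/3) (by linarith)
  refine ⟨J₀, fun J hJ => ?_⟩
  have d1 : dist (T.top 1 (Pj e J) z) (T.top 1 (Pj e J) u) < ε/3 := by
    rw [dist_eq_norm, ← map_sub]
    calc ‖T.top 1 (Pj e J) (z - u)‖ ≤ ‖z - u‖ := Qj_norm T e J _
      _ = dist z u := (dist_eq_norm z u).symm
      _ < ε/3 := hdist
  calc dist (T.top 1 (Pj e J) z) z
      ≤ dist (T.top 1 (Pj e J) z) (T.top 1 (Pj e J) u)
        + dist (T.top 1 (Pj e J) u) u + dist u z := dist_triangle4 _ _ _ _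
    _ < ε/3 + ε/3 + ε/3 := by
        have := hJ₀ J hJ
        have hz : dist u z < ε/3 := by rwa [dist_comm]
        gcongr
    _ = ε := by ring

lemma sliceR_norm_le (Z : HK →L[ℂ] HK) (v w : K) (h : H) :
    ‖T.sliceR Z v w h‖ ≤ ‖w‖ * ‖Z (T.tmul h v)‖ := by
  have h1 : ‖T.sliceR Z v w h‖ ^ 2 ≤ (‖w‖ * ‖Z (T.tmul h v)‖) * ‖T.sliceR Z v w h‖ := by
    rw [← inner_self_eq_norm_sq (𝕜 := ℂ), T.inner_sliceR]
    calc RCLike.re ⟪T.tmul (T.sliceR Z v w h) w, Z (T.tmul h v)⟫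
        ≤ ‖T.tmul (T.sliceR Z v w h) w‖ * ‖Z (T.tmul h v)‖ := re_inner_le_norm _ _
      _ = (‖w‖ * ‖Z (T.tmul h v)‖) * ‖T.sliceR Z v w h‖ := by
          rw [TD.norm_tmul]; ring
  nlinarith [norm_nonneg (T.sliceR Z v w h),
    mul_nonneg (norm_nonneg w) (norm_nonneg (Z (T.tmul h v)))]

lemma sliceR_sub (Z Z' : HK →L[ℂ] HK) (v w : K) :
    T.sliceR (Z - Z') v w = T.sliceR Z v w - T.sliceR Z' v w := by
  ext h
  apply ext_inner_left ℂ
  intro h'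
  simp only [ContinuousLinearMap.sub_apply, inner_sub_right, T.inner_sliceR]

lemma adjoint_sliceR (Z : HK →L[ℂ] HK) (v w : K) :
    adjoint (T.sliceR Z v w) = T.sliceR (adjoint Z) w v := by
  ext h
  apply ext_inner_left ℂ
  intro h'
  rw [adjoint_inner_right, T.inner_sliceR, adjoint_inner_right]
  conv_rhs => rw [← inner_conj_symm]
  rw [← T.inner_sliceR Z v w h' h, inner_conj_symm]

lemma key_vec (Y : HK →L[ℂ] HK) (v : K) (h : H) (J : Finset I) :
    ∑ i ∈ J, T.tmul (T.sliceR Y v (e i) h) (e i)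
      = T.top 1 (Pj e J) (Y (T.tmul h v)) := by
  apply TD.ext_dense T
  intro a b
  rw [TD.top_inner T _ (Pj_selfadj e J), Pj_apply, TD.tmul_sum, inner_sum, sum_inner]
  refine Finset.sum_congr rfl fun i hi => ?_
  rw [T.inner_tmul, TD.tmul_smul, inner_smul_left, inner_conj_symm, T.inner_sliceR]
  ring

lemma S_eq (X Y : HK →L[ℂ] HK) (v w : K) (J : Finset I) :
    (∑ i ∈ J, T.sliceR X (e i) w ∘L T.sliceR Y v (e i))
      = T.sliceR (X ∘L T.top 1 (Pj e J) ∘L Y) v w := by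
  ext h
  apply ext_inner_left ℂ
  intro h'
  rw [T.inner_sliceR]
  simp only [ContinuousLinearMap.sum_apply, ContinuousLinearMap.comp_apply, inner_sum]
  rw [Finset.sum_congr rfl
    (fun i (_ : i ∈ J) => T.inner_sliceR X (e i) w (T.sliceR Y v (e i) h) h')]
  rw [← inner_sum, ← map_sum, key_vec T e Y v h J]

end Aux

/-- For `X, Y ∈ B(H ⊗ K)`, `v, w ∈ K` and an orthonormal basis
`(e_i)` of `K`, the net of finite partial sums
`∑_{i ∈ J} (ι ⊗ ω_{e_i,w})(X) (ι ⊗ ω_{v,e_i})(Y)` is bounded and converges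
strongly-* to `(ι ⊗ ω_{v,w})(XY)`. -/
theorem statement0
    {H K HK : Type*}
    [NormedAddCommGroup H] [InnerProductSpace ℂ H] [CompleteSpace H]
    [NormedAddCommGroup K] [InnerProductSpace ℂ K] [CompleteSpace K]
    [NormedAddCommGroup HK] [InnerProductSpace ℂ HK] [CompleteSpace HK]
    (T : TensorData H K HK)
    (X Y : HK →L[ℂ] HK) (v w : K)
    {I : Type*} (e : HilbertBasis I ℂ K) :
    (∃ C : ℝ, ∀ J : Finset I,
        ‖∑ i ∈ J, T.sliceR X (e i) w ∘L T.sliceR Y v (e i)‖ ≤ C) ∧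
    (∀ h : H,
        Tendsto (fun J : Finset I => (∑ i ∈ J, T.sliceR X (e i) w ∘L T.sliceR Y v (e i)) h)
          atTop (nhds (T.sliceR (X ∘L Y) v w h))) ∧
    (∀ h : H,
        Tendsto (fun J : Finset I =>
            adjoint (∑ i ∈ J, T.sliceR X (e i) w ∘L T.sliceR Y v (e i)) h)
          atTop (nhds (adjoint (T.sliceR (X ∘L Y) v w) h))) := by
  classical
  refine ⟨⟨‖w‖ * (‖X‖ * ‖Y‖) * ‖v‖, fun J => ?_⟩, fun h => ?_, fun h => ?_⟩
  · rw [S_eq T e X Y v w J]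
    apply ContinuousLinearMap.opNorm_le_bound _ (by positivity)
    intro h
    calc ‖T.sliceR (X ∘L T.top 1 (Pj e J) ∘L Y) v w h‖
        ≤ ‖w‖ * ‖(X ∘L T.top 1 (Pj e J) ∘L Y) (T.tmul h v)‖ := sliceR_norm_le T _ v w h
      _ = ‖w‖ * ‖X (T.top 1 (Pj e J) (Y (T.tmul h v)))‖ := rfl
      _ ≤ ‖w‖ * (‖X‖ * ‖T.top 1 (Pj e J) (Y (T.tmul h v))‖) := by
          gcongr
          exact ContinuousLinearMap.le_opNorm X _
      _ ≤ ‖w‖ * (‖X‖ * ‖Y (T.tmul h v)‖) := by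
          gcongr
          exact Qj_norm T e J _
      _ ≤ ‖w‖ * (‖X‖ * (‖Y‖ * ‖T.tmul h v‖)) := by
          gcongr
          exact ContinuousLinearMap.le_opNorm Y _
      _ = ‖w‖ * (‖X‖ * ‖Y‖) * ‖v‖ * ‖h‖ := by rw [TD.norm_tmul]; ring
  · have hkey : ∀ J : Finset I,
        ‖(∑ i ∈ J, T.sliceR X (e i) w ∘L T.sliceR Y v (e i)) h
            - T.sliceR (X ∘L Y) v w h‖
          ≤ ‖w‖ * (‖X‖ * ‖T.top 1 (Pj e J) (Y (T.tmul h v)) - Y (T.tmul h v)‖) := by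
      intro J
      rw [S_eq T e X Y v w J, ← ContinuousLinearMap.sub_apply, ← sliceR_sub T]
      refine le_trans (sliceR_norm_le T _ v w h) ?_
      have heq : ((X ∘L T.top 1 (Pj e J) ∘L Y) - X ∘L Y) (T.tmul h v)
          = X (T.top 1 (Pj e J) (Y (T.tmul h v)) - Y (T.tmul h v)) := by
        simp [map_sub]
      rw [heq]
      gcongr
      exact ContinuousLinearMap.le_opNorm X _
    rw [tendsto_iff_norm_sub_tendsto_zero]
    refine squeeze_zero (fun J => norm_nonneg _) hkey ?_
    have hQ := Qj_tendsto T e (Y (T.tmul h v))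
    rw [tendsto_iff_norm_sub_tendsto_zero] at hQ
    simpa using (hQ.const_mul ‖X‖).const_mul ‖w‖
  · have hadj : ∀ J : Finset I,
        adjoint (∑ i ∈ J, T.sliceR X (e i) w ∘L T.sliceR Y v (e i))
          = T.sliceR (adjoint Y ∘L T.top 1 (Pj e J) ∘L adjoint X) w v := by
      intro J
      rw [S_eq T e X Y v w J, adjoint_sliceR T]
      congr 1
      rw [adjoint_comp, adjoint_comp, TD.topP_adjoint T _ (Pj_selfadj e J),
        ContinuousLinearMap.comp_assoc]
    have hlim : adjoint (T.sliceR (X ∘L Y) v w)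
        = T.sliceR (adjoint Y ∘L adjoint X) w v := by
      rw [adjoint_sliceR T, adjoint_comp]
    have hkey : ∀ J : Finset I,
        ‖adjoint (∑ i ∈ J, T.sliceR X (e i) w ∘L T.sliceR Y v (e i)) h
            - adjoint (T.sliceR (X ∘L Y) v w) h‖
          ≤ ‖v‖ * (‖adjoint Y‖ *
              ‖T.top 1 (Pj e J) (adjoint X (T.tmul h w)) - adjoint X (T.tmul h w)‖) := by
      intro J
      rw [hadj J, hlim, ← ContinuousLinearMap.sub_apply, ← sliceR_sub T]
      refine le_trans (sliceR_norm_le T _ w v h) ?_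
      have heq : ((adjoint Y ∘L T.top 1 (Pj e J) ∘L adjoint X) - adjoint Y ∘L adjoint X)
            (T.tmul h w)
          = adjoint Y (T.top 1 (Pj e J) (adjoint X (T.tmul h w)) - adjoint X (T.tmul h w)) := by
        simp [map_sub]
      rw [heq]
      gcongr
      exact ContinuousLinearMap.le_opNorm _ _
    rw [tendsto_iff_norm_sub_tendsto_zero]
    refine squeeze_zero (fun J => norm_nonneg _) hkey ?_
    have hQ := Qj_tendsto T e (adjoint X (T.tmul h w))
    rw [tendsto_iff_norm_sub_tendsto_zero] at hQ
    simpa using (hQ.const_mul ‖adjoint Y‖).const_mul ‖v‖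
end
end

section
/- Let P_H = {X ∈ B(H) ⊗ M ⊗ B(K) : (ι ⊗ α ⊗ ι)(X) = U*₃₄ X₁₂₄} where U ∈ N ⊗ B(K) is a unitary corepresentation of (N, Δ_N) and α : M → M ⊗ N satisfies (α⊗ι)α = (ι⊗Δ_N)α. Then for any X, Y ∈ P_H, the product Y* X belongs to B(H) ⊗ Q ⊗ B(K), where Q = {x ∈ M : α(x) = x ⊗ 1}. -/
open scoped ComplexInnerProductSpace ENNReal
open ContinuousLinearMap Filter

noncomputable section

section Aux

private lemma adjoint_one' {E : Type*} [NormedAddCommGroup E] [InnerProductSpace ℂ E]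
    [CompleteSpace E] : ContinuousLinearMap.adjoint (1 : E →L[ℂ] E) = 1 := by
  rw [← ContinuousLinearMap.star_eq_adjoint, star_one]

private lemma eq_of_sq_eq_sq {x y : ℝ} (hx : 0 ≤ x) (hy : 0 ≤ y) (h : x ^ 2 = y ^ 2) : x = y := by
  calc x = Real.sqrt (x ^ 2) := (Real.sqrt_sq hx).symm
    _ = Real.sqrt (y ^ 2) := by rw [h]
    _ = y := Real.sqrt_sq hy

namespace TensorData

variable {E F C : Type*}
    [NormedAddCommGroup E] [InnerProductSpace ℂ E] [CompleteSpace E]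
    [NormedAddCommGroup F] [InnerProductSpace ℂ F] [CompleteSpace F]
    [NormedAddCommGroup C] [InnerProductSpace ℂ C] [CompleteSpace C]
    (T : TensorData E F C)

lemma eq_zero_of_inner (z : C) (h : ∀ a b, ⟪z, T.tmul a b⟫ = 0) : z = 0 := by
  have h1 : Submodule.span ℂ (Set.range fun p : E × F => T.tmul p.1 p.2) ≤
      (innerSL ℂ z).ker := by
    rw [Submodule.span_le]
    rintro _ ⟨p, rfl⟩
    simpa using h p.1 p.2
  have h2 : ∀ x : C, ⟪z, x⟫ = 0 := by
    intro x
    have hx : x ∈ closure (Submodule.span ℂ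
        (Set.range fun p : E × F => T.tmul p.1 p.2) : Set C) := T.dense_span x
    have hker : x ∈ closure ((innerSL ℂ z).ker : Set C) :=
      closure_mono h1 hx
    rw [(ContinuousLinearMap.isClosed_ker (innerSL ℂ z)).closure_eq] at hker
    simpa using hker
  exact inner_self_eq_zero.mp (h2 z)

lemma eq_zero_of_inner' (z : C) (h : ∀ a b, ⟪T.tmul a b, z⟫ = 0) : z = 0 :=
  T.eq_zero_of_inner z fun a b => by
    rw [← inner_conj_symm, h a b, map_zero]

lemma tmul_add_left (a a' : E) (b : F) :
    T.tmul (a + a') b = T.tmul a b + T.tmul a' b := by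
  have h := T.eq_zero_of_inner (T.tmul (a + a') b - (T.tmul a b + T.tmul a' b))
    (fun u v => by
      simp only [inner_sub_left, inner_add_left, T.inner_tmul]
      ring)
  exact sub_eq_zero.mp h

lemma tmul_smul_left (r : ℂ) (a : E) (b : F) :
    T.tmul (r • a) b = r • T.tmul a b := by
  have h := T.eq_zero_of_inner (T.tmul (r • a) b - r • T.tmul a b)
    (fun u v => by
      simp only [inner_sub_left, inner_smul_left, T.inner_tmul]
      ring)
  exact sub_eq_zero.mp h

lemma tmul_add_right (a : E) (b b' : F) :
    T.tmul a (b + b') = T.tmul a b + T.tmul a b' := by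
  have h := T.eq_zero_of_inner (T.tmul a (b + b') - (T.tmul a b + T.tmul a b'))
    (fun u v => by
      simp only [inner_sub_left, inner_add_left, T.inner_tmul]
      ring)
  exact sub_eq_zero.mp h

lemma tmul_smul_right (r : ℂ) (a : E) (b : F) :
    T.tmul a (r • b) = r • T.tmul a b := by
  have h := T.eq_zero_of_inner (T.tmul a (r • b) - r • T.tmul a b)
    (fun u v => by
      simp only [inner_sub_left, inner_smul_left, T.inner_tmul]
      ring)
  exact sub_eq_zero.mp h

lemma norm_tmul (a : E) (b : F) : ‖T.tmul a b‖ = ‖a‖ * ‖b‖ := by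
  have h := T.inner_tmul a a b b
  rw [inner_self_eq_norm_sq_to_K, inner_self_eq_norm_sq_to_K,
    inner_self_eq_norm_sq_to_K] at h
  have hr : ‖T.tmul a b‖ ^ 2 = ‖a‖ ^ 2 * ‖b‖ ^ 2 := by exact_mod_cast h
  refine eq_of_sq_eq_sq (norm_nonneg _) (mul_nonneg (norm_nonneg _) (norm_nonneg _)) ?_
  rw [hr, mul_pow]

/-- The continuous linear functional `a ↦ ⟪z, T.tmul a b⟫`. -/
def innerLeftCLM (z : C) (b : F) : E →L[ℂ] ℂ :=
  LinearMap.mkContinuous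
    { toFun := fun a => ⟪z, T.tmul a b⟫
      map_add' := fun a a' => by
        show ⟪z, T.tmul (a + a') b⟫ = ⟪z, T.tmul a b⟫ + ⟪z, T.tmul a' b⟫
        rw [T.tmul_add_left, inner_add_right]
      map_smul' := fun r a => by
        show ⟪z, T.tmul (r • a) b⟫ = (RingHom.id ℂ) r • ⟪z, T.tmul a b⟫
        rw [T.tmul_smul_left, inner_smul_right]; rfl }
    (‖z‖ * ‖b‖)
    (fun a => by
      calc ‖⟪z, T.tmul a b⟫‖ ≤ ‖z‖ * ‖T.tmul a b‖ := norm_inner_le_norm _ _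
        _ = ‖z‖ * ‖b‖ * ‖a‖ := by rw [T.norm_tmul]; ring)

@[simp] lemma innerLeftCLM_apply (z : C) (b : F) (a : E) :
    T.innerLeftCLM z b a = ⟪z, T.tmul a b⟫ := rfl

/-- The continuous linear functional `b ↦ ⟪z, T.tmul a b⟫`. -/
def innerRightCLM (z : C) (a : E) : F →L[ℂ] ℂ :=
  LinearMap.mkContinuous
    { toFun := fun b => ⟪z, T.tmul a b⟫
      map_add' := fun b b' => by
        show ⟪z, T.tmul a (b + b')⟫ = ⟪z, T.tmul a b⟫ + ⟪z, T.tmul a b'⟫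
        rw [T.tmul_add_right, inner_add_right]
      map_smul' := fun r b => by
        show ⟪z, T.tmul a (r • b)⟫ = (RingHom.id ℂ) r • ⟪z, T.tmul a b⟫
        rw [T.tmul_smul_right, inner_smul_right]; rfl }
    (‖z‖ * ‖a‖)
    (fun b => by
      calc ‖⟪z, T.tmul a b⟫‖ ≤ ‖z‖ * ‖T.tmul a b‖ := norm_inner_le_norm _ _
        _ = ‖z‖ * ‖a‖ * ‖b‖ := by rw [T.norm_tmul]; ring)

@[simp] lemma innerRightCLM_apply (z : C) (a : E) (b : F) :
    T.innerRightCLM z a b = ⟪z, T.tmul a b⟫ := rfl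

lemma inner_left_ext (z : C) {S : Set E} (hS : Dense (Submodule.span ℂ S : Set E)) (b : F)
    (h : ∀ a ∈ S, ⟪z, T.tmul a b⟫ = 0) (a : E) : ⟪z, T.tmul a b⟫ = 0 := by
  have h0 : T.innerLeftCLM z b = 0 :=
    ContinuousLinearMap.ext_on hS (fun a ha => by simpa using h a ha)
  simpa using congrArg (fun φ : E →L[ℂ] ℂ => φ a) h0

lemma inner_right_ext (z : C) {S : Set F} (hS : Dense (Submodule.span ℂ S : Set F)) (a : E)
    (h : ∀ b ∈ S, ⟪z, T.tmul a b⟫ = 0) (b : F) : ⟪z, T.tmul a b⟫ = 0 := by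
  have h0 : T.innerRightCLM z a = 0 :=
    ContinuousLinearMap.ext_on hS (fun b hb => by simpa using h b hb)
  simpa using congrArg (fun φ : F →L[ℂ] ℂ => φ b) h0

lemma op_ext {A' B' : C →L[ℂ] C} (h : ∀ a b, A' (T.tmul a b) = B' (T.tmul a b)) :
    A' = B' :=
  ContinuousLinearMap.ext_on T.dense_span (by rintro _ ⟨p, rfl⟩; exact h p.1 p.2)

lemma op_ext_inner {A' B' : C →L[ℂ] C}
    (h : ∀ a b a' b', ⟪T.tmul a' b', A' (T.tmul a b)⟫ = ⟪T.tmul a' b', B' (T.tmul a b)⟫) :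
    A' = B' :=
  T.op_ext fun a b => by
    have h0 := T.eq_zero_of_inner' (A' (T.tmul a b) - B' (T.tmul a b))
      (fun a' b' => by rw [inner_sub_right, h a b a' b', sub_self])
    exact sub_eq_zero.mp h0

lemma top_comp (x x' : E →L[ℂ] E) (y y' : F →L[ℂ] F) :
    T.top x y ∘L T.top x' y' = T.top (x ∘L x') (y ∘L y') :=
  T.op_ext fun a b => by
    simp [T.top_tmul]

lemma top_id : T.top 1 1 = 1 :=
  T.op_ext fun a b => by simp [T.top_tmul]

lemma top_adjoint (x : E →L[ℂ] E) (y : F →L[ℂ] F) :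
    adjoint (T.top x y) = T.top (adjoint x) (adjoint y) :=
  T.op_ext_inner fun a b a' b' => by
    rw [ContinuousLinearMap.adjoint_inner_right, T.top_tmul, T.top_tmul, T.inner_tmul,
      T.inner_tmul, ContinuousLinearMap.adjoint_inner_right,
      ContinuousLinearMap.adjoint_inner_right]

end TensorData

/-- The "insertion in leg 3" operators `Φₙ : H⊗H_M⊗K → H⊗H_M⊗H_N⊗K`. -/
lemma exists_insert
    {HHM K HN HHMK HNK G : Type*}
    [NormedAddCommGroup HHM] [InnerProductSpace ℂ HHM] [CompleteSpace HHM]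
    [NormedAddCommGroup K] [InnerProductSpace ℂ K] [CompleteSpace K]
    [NormedAddCommGroup HN] [InnerProductSpace ℂ HN] [CompleteSpace HN]
    [NormedAddCommGroup HHMK] [InnerProductSpace ℂ HHMK] [CompleteSpace HHMK]
    [NormedAddCommGroup HNK] [InnerProductSpace ℂ HNK] [CompleteSpace HNK]
    [NormedAddCommGroup G] [InnerProductSpace ℂ G] [CompleteSpace G]
    (T2 : TensorData HHM K HHMK) (TU : TensorData HN K HNK) (TG : TensorData HHM HNK G) :
    ∃ Φ : HN → (HHMK →L[ℂ] G),
      (∀ n a k, Φ n (T2.tmul a k) = TG.tmul a (TU.tmul n k)) ∧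
      (∀ n n' u u', ⟪Φ n' u', Φ n u⟫ = ⟪n', n⟫ * ⟪u', u⟫) := by
  classical
  set v : HHM × K → HHMK := fun p => T2.tmul p.1 p.2 with hv
  set P : (HHM × K →₀ ℂ) →ₗ[ℂ] HHMK := Finsupp.linearCombination ℂ v with hP
  set F : HN → ((HHM × K →₀ ℂ) →ₗ[ℂ] G) :=
    fun n => Finsupp.linearCombination ℂ (fun p => TG.tmul p.1 (TU.tmul n p.2)) with hF
  have key : ∀ (n n' : HN) (f g : HHM × K →₀ ℂ),
      ⟪F n' g, F n f⟫ = ⟪n', n⟫ * ⟪P g, P f⟫ := by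
    intro n n' f g
    rw [hF, hP]
    simp only [Finsupp.linearCombination_apply, Finsupp.sum]
    rw [sum_inner, sum_inner, Finset.mul_sum]
    refine Finset.sum_congr rfl fun pp _ => ?_
    rw [inner_sum, inner_sum, Finset.mul_sum]
    refine Finset.sum_congr rfl fun qq _ => ?_
    rw [inner_smul_left, inner_smul_left, inner_smul_right, inner_smul_right,
      TG.inner_tmul, TU.inner_tmul, T2.inner_tmul]
    ring
  have hker : ∀ n, LinearMap.ker P ≤ LinearMap.ker (F n) := by
    intro n f hf
    rw [LinearMap.mem_ker] at hf ⊢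
    have hk := key n n f f
    rw [hf, inner_zero_left, mul_zero] at hk
    exact inner_self_eq_zero.mp hk
  have hrange : ((LinearMap.range P : Submodule ℂ HHMK) : Set HHMK) =
      (Submodule.span ℂ (Set.range v) : Set HHMK) := by
    rw [hP, Finsupp.range_linearCombination]
  have hDdense : Dense ((LinearMap.range P : Submodule ℂ HHMK) : Set HHMK) := by
    rw [hrange]
    exact T2.dense_span
  have main : ∀ n : HN, ∃ Φn : HHMK →L[ℂ] G,
      ∀ f : HHM × K →₀ ℂ, Φn (P f) = F n f := by
    intro n
    set D := LinearMap.range P with hD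
    set f0 : D →ₗ[ℂ] G :=
      ((LinearMap.ker P).liftQ (F n) (hker n)).comp P.quotKerEquivRange.symm.toLinearMap
      with hf0
    have hf0P : ∀ f : HHM × K →₀ ℂ, f0 ⟨P f, LinearMap.mem_range_self P f⟩ = F n f := by
      intro f
      rw [hf0]
      simp only [LinearMap.coe_comp, Function.comp_apply, LinearEquiv.coe_coe]
      rw [LinearMap.quotKerEquivRange_symm_apply_image P f (LinearMap.mem_range_self P f)]
      simp [Submodule.mkQ_apply, Submodule.liftQ_apply]
    have hbound : ∀ d : D, ‖f0 d‖ ≤ ‖n‖ * ‖d‖ := by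
      rintro ⟨d, hd⟩
      obtain ⟨f, rfl⟩ := hd
      rw [hf0P f]
      have hk := key n n f f
      rw [inner_self_eq_norm_sq_to_K, inner_self_eq_norm_sq_to_K,
        inner_self_eq_norm_sq_to_K] at hk
      have h2 : ‖F n f‖ ^ 2 = ‖n‖ ^ 2 * ‖P f‖ ^ 2 := by exact_mod_cast hk
      have h3 : ‖F n f‖ = ‖n‖ * ‖P f‖ :=
        eq_of_sq_eq_sq (norm_nonneg _) (mul_nonneg (norm_nonneg _) (norm_nonneg _))
          (by rw [h2, mul_pow])
      rw [h3]
      rfl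
    set f1 : D →L[ℂ] G := LinearMap.mkContinuous f0 ‖n‖ hbound with hf1
    have hdr : DenseRange (D.subtypeL) := by
      have : Set.range (D.subtypeL) = (D : Set HHMK) := by
        rw [Submodule.coe_subtypeL']
        exact Subtype.range_coe
      rw [DenseRange, this]
      exact hDdense
    have hui : IsUniformInducing (D.subtypeL) :=
      isUniformEmbedding_subtype_val.isUniformInducing
    refine ⟨f1.extend D.subtypeL, ?_⟩
    intro f
    have := ContinuousLinearMap.extend_eq f1 hdr hui
      ⟨P f, LinearMap.mem_range_self P f⟩
    have h2 : f1 ⟨P f, LinearMap.mem_range_self P f⟩ = F n f := by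
      rw [hf1, LinearMap.mkContinuous_apply, hf0P f]
    simpa [h2] using this
  choose Φ hΦ using main
  have hΦ2 : ∀ n n' u u', ⟪Φ n' u', Φ n u⟫ = ⟪n', n⟫ * ⟪u', u⟫ := by
    intro n n'
    have hfun : (fun z : HHMK × HHMK => ⟪Φ n' z.1, Φ n z.2⟫) =
        fun z : HHMK × HHMK => ⟪n', n⟫ * ⟪z.1, z.2⟫ := by
      refine Continuous.ext_on (hDdense.prod hDdense) ?_ ?_ ?_
      · exact Continuous.inner ((Φ n').continuous.comp continuous_fst)
          ((Φ n).continuous.comp continuous_snd)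
      · exact continuous_const.mul (Continuous.inner continuous_fst continuous_snd)
      · rintro ⟨u', u⟩ ⟨hu', hu⟩
        obtain ⟨g, rfl⟩ := hu'
        obtain ⟨f, rfl⟩ := hu
        simp only
        rw [hΦ n' g, hΦ n f, key]
    intro u u'
    exact congrFun hfun (u', u)
  refine ⟨Φ, ?_, hΦ2⟩
  intro n a k
  have h1 := hΦ n (Finsupp.single (a, k) 1)
  rw [hP, hF] at h1
  simpa [Finsupp.linearCombination_single, hv] using h1

end Aux

/-- Let `P_H = {X ∈ B(H) ⊗ M ⊗ B(K) : (ι⊗α⊗ι)(X) = U*₃₄ X₁₂₄}`, where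
`U ∈ N ⊗ B(K)` is a unitary corepresentation and `α : M → M ⊗ N` an action.
For `X, Y ∈ P_H`, the product `Y* X` belongs to `B(H) ⊗ Q ⊗ B(K)`, i.e. all of its
middle-leg slices lie in the fixed point algebra `Q = {x ∈ M : α(x) = x ⊗ 1}`. -/
theorem statement4
    {H HM HN K HHM HHMK HNK HMN G : Type*}
    [NormedAddCommGroup H] [InnerProductSpace ℂ H] [CompleteSpace H]
    [NormedAddCommGroup HM] [InnerProductSpace ℂ HM] [CompleteSpace HM]
    [NormedAddCommGroup HN] [InnerProductSpace ℂ HN] [CompleteSpace HN]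
    [NormedAddCommGroup K] [InnerProductSpace ℂ K] [CompleteSpace K]
    [NormedAddCommGroup HHM] [InnerProductSpace ℂ HHM] [CompleteSpace HHM]
    [NormedAddCommGroup HHMK] [InnerProductSpace ℂ HHMK] [CompleteSpace HHMK]
    [NormedAddCommGroup HNK] [InnerProductSpace ℂ HNK] [CompleteSpace HNK]
    [NormedAddCommGroup HMN] [InnerProductSpace ℂ HMN] [CompleteSpace HMN]
    [NormedAddCommGroup G] [InnerProductSpace ℂ G] [CompleteSpace G]
    (T1 : TensorData H HM HHM)      -- `H ⊗ H_M`
    (T2 : TensorData HHM K HHMK)    -- `(H ⊗ H_M) ⊗ K`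
    (TU : TensorData HN K HNK)      -- `H_N ⊗ K`
    (TMN : TensorData HM HN HMN)    -- `H_M ⊗ H_N`
    (TG : TensorData HHM HNK G)     -- `H ⊗ H_M ⊗ H_N ⊗ K`
    (M : VonNeumannAlgebra HM)
    -- the action `α : M → M ⊗ N`
    (α : (HM →L[ℂ] HM) → (HMN →L[ℂ] HMN))
    (hαmul : ∀ a b, α (a ∘L b) = α a ∘L α b)
    (hαstar : ∀ a, α (adjoint a) = adjoint (α a))
    (hαone : α 1 = 1)
    -- `ι ⊗ α ⊗ ι : B(H) ⊗ M ⊗ B(K) → B(H) ⊗ M ⊗ N ⊗ B(K)`, a normal *-homomorphism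
    (ιαι : (HHMK →L[ℂ] HHMK) → (G →L[ℂ] G))
    (hιαιmul : ∀ Z W, ιαι (Z ∘L W) = ιαι Z ∘L ιαι W)
    (hιαιstar : ∀ Z, ιαι (adjoint Z) = adjoint (ιαι Z))
    -- leg-(2,3) embedding `B(H_M ⊗ H_N) → B(H ⊗ H_M ⊗ H_N ⊗ K)`
    (leg23 : (HMN →L[ℂ] HMN) → (G →L[ℂ] G))
    (hleg23 : ∀ (Z : HMN →L[ℂ] HMN) (h h' : H) (m m' : HM) (n n' : HN) (k k' : K),
      ⟪TG.tmul (T1.tmul h' m') (TU.tmul n' k'),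
          leg23 Z (TG.tmul (T1.tmul h m) (TU.tmul n k))⟫ =
        ⟪TMN.tmul m' n', Z (TMN.tmul m n)⟫ * (⟪h', h⟫ * ⟪k', k⟫))
    (hιαι : ∀ (a : H →L[ℂ] H) (m : HM →L[ℂ] HM) (c : K →L[ℂ] K),
      ιαι (T2.top (T1.top a m) c) =
        TG.top (T1.top a 1) 1 ∘L leg23 (α m) ∘L TG.top 1 (TU.top 1 c))
    -- leg-(1,2,4) embedding `X ↦ X₁₂₄`
    (leg124 : (HHMK →L[ℂ] HHMK) → (G →L[ℂ] G))
    (hleg124 : ∀ (Z : HHMK →L[ℂ] HHMK) (h h' : H) (m m' : HM) (n n' : HN) (k k' : K),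
      ⟪TG.tmul (T1.tmul h' m') (TU.tmul n' k'),
          leg124 Z (TG.tmul (T1.tmul h m) (TU.tmul n k))⟫ =
        ⟪T2.tmul (T1.tmul h' m') k', Z (T2.tmul (T1.tmul h m) k)⟫ * ⟪n', n⟫)
    -- compatibility of `ι⊗α⊗ι` with middle slices:
    -- `(ω_{v,w} ⊗ ι ⊗ ι ⊗ ω_{p,q})((ι⊗α⊗ι)(Z)) = α((ω_{v,w} ⊗ ι ⊗ ω_{p,q})(Z))`
    (sliceG23 : (G →L[ℂ] G) → H → H → K → K → (HMN →L[ℂ] HMN))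
    (hsliceG23 : ∀ (W : G →L[ℂ] G) (v w : H) (p q : K) (m m' : HM) (n n' : HN),
      ⟪TMN.tmul m' n', sliceG23 W v w p q (TMN.tmul m n)⟫ =
        ⟪TG.tmul (T1.tmul w m') (TU.tmul n' q), W (TG.tmul (T1.tmul v m) (TU.tmul n p))⟫)
    (hcompat : ∀ (Z : HHMK →L[ℂ] HHMK) (v w : H) (p q : K),
      sliceG23 (ιαι Z) v w p q = α (T1.sliceL (T2.sliceR Z p q) v w))
    -- the unitary corepresentation `U`
    (U : HNK →L[ℂ] HNK)
    (hU : adjoint U ∘L U = 1 ∧ U ∘L adjoint U = 1)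
    -- `X, Y ∈ B(H) ⊗ M ⊗ B(K)` (middle slices in `M`) and `X, Y ∈ P_H`
    (X Y : HHMK →L[ℂ] HHMK)
    (hXM : ∀ (v w : H) (p q : K), T1.sliceL (T2.sliceR X p q) v w ∈ M)
    (hYM : ∀ (v w : H) (p q : K), T1.sliceL (T2.sliceR Y p q) v w ∈ M)
    (hXP : ιαι X = adjoint (TG.top 1 U) ∘L leg124 X)
    (hYP : ιαι Y = adjoint (TG.top 1 U) ∘L leg124 Y) :
    ∀ (v w : H) (p q : K),
      T1.sliceL (T2.sliceR (adjoint Y ∘L X) p q) v w ∈ M ∧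
      α (T1.sliceL (T2.sliceR (adjoint Y ∘L X) p q) v w) =
        TMN.top (T1.sliceL (T2.sliceR (adjoint Y ∘L X) p q) v w) 1 := by
  classical
  obtain ⟨Φ, hΦ1, hΦ2⟩ := exists_insert T2 TU TG
  have h11 : (1 : HHM →L[ℂ] HHM) ∘L (1 : HHM →L[ℂ] HHM) = 1 := by ext z; rfl
  have hQQ : TG.top 1 U ∘L adjoint (TG.top 1 U) = 1 := by
    rw [TG.top_adjoint, adjoint_one', TG.top_comp, hU.2, h11, TG.top_id]
  have hYX : ιαι (adjoint Y ∘L X) = adjoint (leg124 Y) ∘L leg124 X := by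
    rw [hιαιmul, hιαιstar, hXP, hYP, ContinuousLinearMap.adjoint_comp,
      ContinuousLinearMap.adjoint_adjoint]
    ext ζ
    show adjoint (leg124 Y) (TG.top 1 U (adjoint (TG.top 1 U) (leg124 X ζ))) =
      adjoint (leg124 Y) (leg124 X ζ)
    congr 1
    have hq := congrArg (fun (op : G →L[ℂ] G) => op (leg124 X ζ)) hQQ
    simpa using hq
  -- generic entry formula for middle slices
  have hentry : ∀ (Z : HHMK →L[ℂ] HHMK) (h h' : H) (m m' : HM) (k k' : K),
      ⟪T2.tmul (T1.tmul h' m') k', Z (T2.tmul (T1.tmul h m) k)⟫ =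
      ⟪m', T1.sliceL (T2.sliceR Z k k') h h' m⟫ := by
    intro Z h h' m m' k k'
    rw [T1.inner_sliceL, T2.inner_sliceR]
  -- commutation of `Z` with `1 ⊗ c ⊗ 1` from commutation of slices
  have subA : ∀ (Z : HHMK →L[ℂ] HHMK) (c0 : HM →L[ℂ] HM),
      (∀ (h h' : H) (k k' : K),
        T1.sliceL (T2.sliceR Z k k') h h' ∘L c0 = c0 ∘L T1.sliceL (T2.sliceR Z k k') h h') →
      ∀ (h : H) (m : HM) (k : K),
        Z (T2.tmul (T1.tmul h (c0 m)) k) =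
          T2.top (T1.top 1 c0) 1 (Z (T2.tmul (T1.tmul h m) k)) := by
    intro Z c0 hcomm h m k
    set z := Z (T2.tmul (T1.tmul h (c0 m)) k) -
      T2.top (T1.top 1 c0) 1 (Z (T2.tmul (T1.tmul h m) k)) with hz
    have step1 : ∀ (h' : H) (m' : HM) (k' : K), ⟪T2.tmul (T1.tmul h' m') k', z⟫ = 0 := by
      intro h' m' k'
      rw [hz, inner_sub_right]
      have e1 : ⟪T2.tmul (T1.tmul h' m') k', Z (T2.tmul (T1.tmul h (c0 m)) k)⟫ =
          ⟪m', T1.sliceL (T2.sliceR Z k k') h h' (c0 m)⟫ := hentry Z h h' (c0 m) m' k k'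
      have e2 : ⟪T2.tmul (T1.tmul h' m') k',
            T2.top (T1.top 1 c0) 1 (Z (T2.tmul (T1.tmul h m) k))⟫ =
          ⟪m', c0 (T1.sliceL (T2.sliceR Z k k') h h' m)⟫ := by
        rw [← ContinuousLinearMap.adjoint_inner_left (T2.top (T1.top 1 c0) 1)
            (Z (T2.tmul (T1.tmul h m) k)) (T2.tmul (T1.tmul h' m') k'),
          T2.top_adjoint, T1.top_adjoint, adjoint_one', adjoint_one', T2.top_tmul,
          T1.top_tmul, ContinuousLinearMap.one_apply, ContinuousLinearMap.one_apply,
          hentry Z h h' m (adjoint c0 m') k k', ContinuousLinearMap.adjoint_inner_left]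
      rw [e1, e2]
      have hcm := congrArg (fun (op : HM →L[ℂ] HM) => op m) (hcomm h h' k k')
      simp only [ContinuousLinearMap.coe_comp', Function.comp_apply] at hcm
      rw [hcm, sub_self]
    have step2 : ∀ (a' : HHM) (k' : K), ⟪z, T2.tmul a' k'⟫ = 0 := by
      intro a' k'
      refine T2.inner_left_ext z T1.dense_span k' ?_ a'
      rintro _ ⟨pp, rfl⟩
      rw [← inner_conj_symm, step1 pp.1 pp.2 k', map_zero]
    have hz0 : z = 0 := T2.eq_zero_of_inner z step2
    rw [hz] at hz0
    exact sub_eq_zero.mp hz0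
  -- key claim: `leg124` acts as `Φ`
  have claimC : ∀ (Z : HHMK →L[ℂ] HHMK) (h : H) (m : HM) (n : HN) (k : K),
      leg124 Z (TG.tmul (T1.tmul h m) (TU.tmul n k)) = Φ n (Z (T2.tmul (T1.tmul h m) k)) := by
    intro Z h m n k
    set μ := leg124 Z (TG.tmul (T1.tmul h m) (TU.tmul n k)) -
      Φ n (Z (T2.tmul (T1.tmul h m) k)) with hμ
    have step1 : ∀ (h' : H) (m' : HM) (n' : HN) (k' : K),
        ⟪TG.tmul (T1.tmul h' m') (TU.tmul n' k'), μ⟫ = 0 := by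
      intro h' m' n' k'
      rw [hμ, inner_sub_right, hleg124, ← hΦ1 n' (T1.tmul h' m') k', hΦ2]
      ring
    have step2 : ∀ (a' : HHM) (n' : HN) (k' : K), ⟪μ, TG.tmul a' (TU.tmul n' k')⟫ = 0 := by
      intro a' n' k'
      refine TG.inner_left_ext μ T1.dense_span (TU.tmul n' k') ?_ a'
      rintro _ ⟨pp, rfl⟩
      rw [← inner_conj_symm, step1 pp.1 pp.2 n' k', map_zero]
    have step3 : ∀ (a' : HHM) (b' : HNK), ⟪μ, TG.tmul a' b'⟫ = 0 := by
      intro a' b'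
      refine TG.inner_right_ext μ TU.dense_span a' ?_ b'
      rintro _ ⟨pp, rfl⟩
      exact step2 a' pp.1 pp.2
    have hμ0 : μ = 0 := TG.eq_zero_of_inner μ step3
    rw [hμ] at hμ0
    exact sub_eq_zero.mp hμ0
  intro v w p q
  set x := T1.sliceL (T2.sliceR (adjoint Y ∘L X) p q) v w with hx
  have hxentry : ∀ m m' : HM, ⟪m', x m⟫ =
      ⟪Y (T2.tmul (T1.tmul w m') q), X (T2.tmul (T1.tmul v m) p)⟫ := by
    intro m m'
    rw [hx, T1.inner_sliceL, T2.inner_sliceR]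
    simp only [ContinuousLinearMap.coe_comp', Function.comp_apply]
    rw [ContinuousLinearMap.adjoint_inner_right]
  have hslice : sliceG23 (ιαι (adjoint Y ∘L X)) v w p q = TMN.top x 1 := by
    rw [hYX]
    refine TMN.op_ext_inner fun m n m' n' => ?_
    rw [hsliceG23]
    simp only [ContinuousLinearMap.coe_comp', Function.comp_apply]
    rw [ContinuousLinearMap.adjoint_inner_right, claimC Y w m' n' q, claimC X v m n p,
      hΦ2, ← hxentry m m', TMN.top_tmul, ContinuousLinearMap.one_apply, TMN.inner_tmul]
    ring
  constructor
  · -- membership in `M` via the double commutant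
    rw [← SetLike.mem_coe, ← M.centralizer_centralizer]
    rw [Set.mem_centralizer_iff]
    intro c hc
    have hcM : ∀ g : HM →L[ℂ] HM, g ∈ M → g ∘L c = c ∘L g := by
      intro g hg
      have hgc := Set.mem_centralizer_iff.mp hc g (SetLike.mem_coe.mpr hg)
      rw [ContinuousLinearMap.mul_def, ContinuousLinearMap.mul_def] at hgc
      exact hgc
    have hstar : star c ∈ Set.centralizer (M : Set (HM →L[ℂ] HM)) := by
      rw [Set.mem_centralizer_iff]
      intro g hg
      have hg' : star g ∈ M := star_mem (SetLike.mem_coe.mp hg)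
      have h1 := Set.mem_centralizer_iff.mp hc (star g) (SetLike.mem_coe.mpr hg')
      calc g * star c = star (c * star g) := by rw [star_mul, star_star]
        _ = star (star g * c) := by rw [h1]
        _ = star c * g := by rw [star_mul, star_star]
    have hstarM : ∀ g : HM →L[ℂ] HM, g ∈ M → g ∘L star c = star c ∘L g := by
      intro g hg
      have hgc := Set.mem_centralizer_iff.mp hstar g (SetLike.mem_coe.mpr hg)
      rw [ContinuousLinearMap.mul_def, ContinuousLinearMap.mul_def] at hgc
      exact hgc
    have hXc := subA X c (fun h h' k k' => hcM _ (hXM h h' k k'))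
    have hYc := subA Y (star c) (fun h h' k k' => hstarM _ (hYM h h' k k'))
    refine ContinuousLinearMap.ext fun m => ?_
    rw [ContinuousLinearMap.mul_apply, ContinuousLinearMap.mul_apply]
    refine ext_inner_left ℂ fun m' => ?_
    calc ⟪m', c (x m)⟫
        = ⟪adjoint c m', x m⟫ := (ContinuousLinearMap.adjoint_inner_left c (x m) m').symm
      _ = ⟪star c m', x m⟫ := by rw [ContinuousLinearMap.star_eq_adjoint]
      _ = ⟪Y (T2.tmul (T1.tmul w (star c m')) q), X (T2.tmul (T1.tmul v m) p)⟫ :=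
          hxentry m (star c m')
      _ = ⟪T2.top (T1.top 1 (star c)) 1 (Y (T2.tmul (T1.tmul w m') q)),
            X (T2.tmul (T1.tmul v m) p)⟫ := by rw [hYc w m' q]
      _ = ⟪Y (T2.tmul (T1.tmul w m') q),
            adjoint (T2.top (T1.top 1 (star c)) 1) (X (T2.tmul (T1.tmul v m) p))⟫ :=
          (ContinuousLinearMap.adjoint_inner_right _ _ _).symm
      _ = ⟪Y (T2.tmul (T1.tmul w m') q),
            T2.top (T1.top 1 c) 1 (X (T2.tmul (T1.tmul v m) p))⟫ := by
          rw [T2.top_adjoint, T1.top_adjoint, adjoint_one', adjoint_one',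
            ← ContinuousLinearMap.star_eq_adjoint, star_star]
      _ = ⟪Y (T2.tmul (T1.tmul w m') q), X (T2.tmul (T1.tmul v (c m)) p)⟫ := by
          rw [hXc v m p]
      _ = ⟪m', x (c m)⟫ := (hxentry (c m) m').symm
  · exact (hcompat (adjoint Y ∘L X) v w p q).symm.trans hslice
end
end
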